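/- arXiv:1707.01600 — 4 statements merged into one kernel-verified Lean document; each statement's English description precedes it below -/
import Mathlib

section
/- Let u > e^r > d > 0 and H ≥ 0. With p_u := (u^H e^r - d^{H+1})/(u^{H+1} - d^{H+1}), p_d := (e^r d^H - d^{H+1})/(u^{H+1} - d^{H+1}), q_u := 1 - p_u, q_d := 1 - p_d, one has q_d > q_u and p_u > p_d whenever H ≥ 1; equivalently, the Markov chain with transition matrix rows (q_d, p_d) and (q_u, p_u) has positive one-step autocorrelation: a down move is more likely after a down move than after an up move. -/
theorem div_sub_pow_lt_div_sub_pow {K : Type*} [Field K] [LinearOrder K] [IsStrictOrderedRing K]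
    {u d c : K} {n : ℕ} (hn : n ≠ 0) (hd : 0 ≤ d) (hdu : d < u) (hc : 0 < c) :
    (c * d ^ n - d ^ (n + 1)) / (u ^ (n + 1) - d ^ (n + 1)) <
      (u ^ n * c - d ^ (n + 1)) / (u ^ (n + 1) - d ^ (n + 1)) := by
  have hden : 0 < u ^ (n + 1) - d ^ (n + 1) :=
    sub_pos.2 (pow_lt_pow_left₀ hdu hd n.succ_ne_zero)
  have hnum : c * d ^ n < u ^ n * c := by
    rw [mul_comm]
    exact mul_lt_mul_of_pos_right (pow_lt_pow_left₀ hdu hd hn) hc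
  exact div_lt_div_of_pos_right (sub_lt_sub_right hnum _) hden

theorem stmt8 (u d r : ℝ) (H : ℕ)
    (hu : u > Real.exp r) (hd : Real.exp r > d) (hd0 : d > 0) (hH : 1 ≤ H)
    (pu pd qu qd : ℝ)
    (hpu : pu = (u ^ H * Real.exp r - d ^ (H + 1)) / (u ^ (H + 1) - d ^ (H + 1)))
    (hpd : pd = (Real.exp r * d ^ H - d ^ (H + 1)) / (u ^ (H + 1) - d ^ (H + 1)))
    (hqu : qu = 1 - pu) (hqd : qd = 1 - pd) :
    qd > qu ∧ pu > pd := by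
  have hpd_lt_pu : pd < pu := by
    rw [hpu, hpd]
    exact div_sub_pow_lt_div_sub_pow (by omega) hd0.le (hd.trans hu) (Real.exp_pos r)
  exact ⟨by linarith, hpd_lt_pu⟩
end

section
/- Fix μ, σ > 0, r ≥ 0, T > 0, integer H ≥ 0, and set δ_n = 1/√n, u_n = exp(μTδ_n² + σ√T δ_n), d_n = exp(μTδ_n² − σ√T δ_n), r_n = rTδ_n². Define p_{n,u} := (u_n^H e^{r_n} − d_n^{H+1})/(u_n^{H+1} − d_n^{H+1}). Then p_{n,u} = (2H+1)/(2(H+1)) − [ (μ−r)/(2(H+1)σ) + (2H+1)σ/(4(H+1)) ]√T δ_n + O(δ_n²) as n → ∞. -/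
/-! Write `x = δ_n`. Then `p_{n,u} = (E₁ - E₂) / (E₃ - E₂)` with `E₁ = exp (A x² + B x)`
and `E₂, E₃ = exp (C x² ∓ D x)`. Expanding each exponential to second order, the affine
function `φ x = L + c x` with `L = (B + D) / (2D)` and `c = (A + B²/2 - C - D²/2) / (2D)`
makes the numerator `E₁ - E₂ - φ (E₃ - E₂)` vanish to third order, while the denominator
is `2 D x + O(x³)`; dividing gives `p - φ = O(x²)`. -/

open Filter Asymptotics Topology

theorem Asymptotics.isBigO_div_sub_of_sub_mul {α 𝕜 : Type*} [NormedField 𝕜] {l : Filter α}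
    {f g φ u v : α → 𝕜} (hf : (fun a => f a - φ a * g a) =O[l] fun a => u a * v a)
    (hg : v =O[l] g) (hv : ∀ᶠ a in l, v a ≠ 0) :
    (fun a => f a / g a - φ a) =O[l] u := by
  have hg_inv : (fun a => (g a)⁻¹) =O[l] fun a => (v a)⁻¹ :=
    hg.inv_rev (hv.mono fun a ha h => absurd h ha)
  have hg0 : ∀ᶠ a in l, g a ≠ 0 :=
    (hg.eq_zero_imp.and hv).mono fun a ⟨himp, ha⟩ h => ha (himp h)
  refine (hf.mul hg_inv).congr' ?_ ?_
  · filter_upwards [hg0] with a ha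
    field_simp
  · filter_upwards [hv] with a ha
    field_simp

theorem Real.exp_quadratic_sub_taylor_isBigO (a b : ℝ) :
    (fun x => exp (a * x ^ 2 + b * x) - (1 + b * x + (a + b ^ 2 / 2) * x ^ 2))
      =O[𝓝 0] (· ^ 3) := by
  set t : ℝ → ℝ := fun x => a * x ^ 2 + b * x
  have ht : Tendsto t (𝓝 0) (𝓝 0) := (by fun_prop : Continuous t).tendsto' 0 0 (by simp [t])
  have ht_isBigO : t =O[𝓝 0] id :=
    ((isLittleO_pow_id one_lt_two).isBigO.const_mul_left a).add
      ((isBigO_refl _ _).const_mul_left b)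
  have hexp := ((exp_sub_sum_range_isBigO_pow 3).comp_tendsto ht).trans (ht_isBigO.pow 3)
  have hpoly : (fun x => (a * b + a ^ 2 / 2 * x) * x ^ 3) =O[𝓝 0] (· ^ 3) :=
    ((by fun_prop : Continuous fun x : ℝ => a * b + a ^ 2 / 2 * x).tendsto 0).isBigO_one ℝ
      |>.mul (isBigO_refl _ _) |>.congr_right fun x => one_mul _
  refine (hexp.add hpoly).congr_left fun x => ?_
  simp only [Function.comp_def, Finset.sum_range_succ, Finset.sum_range_zero, t]
  norm_num [Nat.factorial]
  ring

theorem Real.exp_quadratic_ratio_sub_affine_isBigO (A B C D : ℝ) (hD : D ≠ 0) :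
    (fun x => (exp (A * x ^ 2 + B * x) - exp (C * x ^ 2 - D * x))
        / (exp (C * x ^ 2 + D * x) - exp (C * x ^ 2 - D * x))
      - ((B + D) / (2 * D) + (A + B ^ 2 / 2 - C - D ^ 2 / 2) / (2 * D) * x))
      =O[𝓝[≠] 0] (· ^ 2) := by
  have hA := exp_quadratic_sub_taylor_isBigO A B
  have hCD := exp_quadratic_sub_taylor_isBigO C D
  have hCnegD : (fun x => exp (C * x ^ 2 - D * x)
      - (1 + -D * x + (C + (-D) ^ 2 / 2) * x ^ 2)) =O[𝓝 0] (· ^ 3) :=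
    (exp_quadratic_sub_taylor_isBigO C (-D)).congr_left fun x => by
      rw [neg_mul, ← sub_eq_add_neg]
  set φ : ℝ → ℝ := fun x => (B + D) / (2 * D) + (A + B ^ 2 / 2 - C - D ^ 2 / 2) / (2 * D) * x
  have hφ : φ =O[𝓝 0] (fun _ => (1 : ℝ)) :=
    ((by fun_prop : Continuous φ).tendsto 0).isBigO_one ℝ
  have hnum : (fun x => (exp (A * x ^ 2 + B * x) - exp (C * x ^ 2 - D * x))
      - φ x * (exp (C * x ^ 2 + D * x) - exp (C * x ^ 2 - D * x)))
      =O[𝓝 0] fun x => x ^ 2 * x := by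
    refine ((hA.sub hCnegD).sub ((hφ.mul (hCD.sub hCnegD)).congr_right fun x => one_mul _)).congr
      (fun x => ?_) fun x => by ring
    simp only [φ]
    field_simp
    ring
  have h2D : 2 * D ≠ 0 := mul_ne_zero two_ne_zero hD
  have hden : (fun x : ℝ => x)
      =O[𝓝 0] fun x => exp (C * x ^ 2 + D * x) - exp (C * x ^ 2 - D * x) := by
    have hlin : (fun x => exp (C * x ^ 2 + D * x) - exp (C * x ^ 2 - D * x) - 2 * D * x)
        =o[𝓝 0] fun x => 2 * D * x :=
      ((hCD.sub hCnegD).trans_isLittleO (isLittleO_pow_id (by norm_num))).trans_isBigO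
        (isBigO_self_const_mul h2D id _) |>.congr_left fun x => by ring
    exact (isBigO_self_const_mul h2D id _).trans hlin.isEquivalent.isBigO_symm
  exact isBigO_div_sub_of_sub_mul (hnum.mono nhdsWithin_le_nhds) (hden.mono nhdsWithin_le_nhds)
    self_mem_nhdsWithin

theorem stmt10_general (μ σ r T : ℝ) (hσ : σ > 0) (hT : T > 0) (H : ℕ)
    (δ un dn rn pnu : ℕ → ℝ)
    (hδ : ∀ n : ℕ, δ n = 1 / Real.sqrt n)
    (hu : ∀ n, un n = Real.exp (μ * T * δ n ^ 2 + σ * Real.sqrt T * δ n))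
    (hd : ∀ n, dn n = Real.exp (μ * T * δ n ^ 2 - σ * Real.sqrt T * δ n))
    (hr' : ∀ n, rn n = r * T * δ n ^ 2)
    (hp : ∀ n, pnu n = (un n ^ H * Real.exp (rn n) - dn n ^ (H + 1)) /
      (un n ^ (H + 1) - dn n ^ (H + 1))) :
    (fun n : ℕ => pnu n - ((2 * (H : ℝ) + 1) / (2 * ((H : ℝ) + 1))
        - ((μ - r) / (2 * ((H : ℝ) + 1) * σ) + (2 * (H : ℝ) + 1) * σ / (4 * ((H : ℝ) + 1)))
            * Real.sqrt T * δ n))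
      =O[atTop] fun n => δ n ^ 2 := by
  obtain ⟨s, hs, rfl⟩ : ∃ s : ℝ, 0 < s ∧ T = s ^ 2 :=
    ⟨√T, by positivity, (Real.sq_sqrt hT.le).symm⟩
  rw [Real.sqrt_sq hs.le] at hu hd ⊢
  have hδ0 : Tendsto δ atTop (𝓝[≠] 0) := by
    refine tendsto_nhdsWithin_iff.2 ⟨?_, ?_⟩
    · simpa only [funext hδ, one_div, Function.comp_def, Pi.inv_def] using
        (Real.tendsto_sqrt_atTop.comp tendsto_natCast_atTop_atTop).inv_tendsto_atTop
    · filter_upwards [eventually_gt_atTop 0] with n hn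
      simp [hδ n, hn.ne']
  have hexp := (Real.exp_quadratic_ratio_sub_affine_isBigO (H * μ * s ^ 2 + r * s ^ 2) (H * σ * s)
    ((H + 1) * μ * s ^ 2) ((H + 1) * σ * s) (by positivity)).comp_tendsto hδ0
  refine hexp.congr_left fun n => ?_
  simp only [Function.comp_apply, hp, hu, hd, hr', ← Real.exp_nat_mul, ← Real.exp_add]
  push_cast
  field_simp
  ring_nf

theorem stmt10 (μ σ r T : ℝ) (hμ : μ > 0) (hσ : σ > 0) (hr : r ≥ 0) (hT : T > 0) (H : ℕ)
    (δ un dn rn pnu : ℕ → ℝ)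
    (hδ : ∀ n : ℕ, δ n = 1 / Real.sqrt n)
    (hu : ∀ n, un n = Real.exp (μ * T * δ n ^ 2 + σ * Real.sqrt T * δ n))
    (hd : ∀ n, dn n = Real.exp (μ * T * δ n ^ 2 - σ * Real.sqrt T * δ n))
    (hr' : ∀ n, rn n = r * T * δ n ^ 2)
    (hp : ∀ n, pnu n = (un n ^ H * Real.exp (rn n) - dn n ^ (H + 1)) /
      (un n ^ (H + 1) - dn n ^ (H + 1))) :
    (fun n : ℕ => pnu n - ((2 * (H : ℝ) + 1) / (2 * ((H : ℝ) + 1))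
        - ((μ - r) / (2 * ((H : ℝ) + 1) * σ) + (2 * (H : ℝ) + 1) * σ / (4 * ((H : ℝ) + 1)))
            * Real.sqrt T * δ n))
      =O[atTop] fun n => δ n ^ 2 :=
  stmt10_general μ σ r T hσ hT H δ un dn rn pnu hδ hu hd hr' hp
end

section
/- With the same scaling as above, define p_{n,d} := (e^{r_n} d_n^H − d_n^{H+1})/(u_n^{H+1} − d_n^{H+1}). Then p_{n,d} = 1/(2(H+1)) − [ (μ−r)/(2(H+1)σ) + (2H+1)σ/(4(H+1)) ]√T δ_n + O(δ_n²), and consequently λ_n := p_{n,u} − p_{n,d} = H/(H+1) + O(δ_n²). -/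
/-!
Each of `u_n^(H+1)`, `d_n^(H+1)`, `e^(r_n) d_n^H`, `u_n^H e^(r_n)` is `exp (a x + b x²)` at
`x = δ_n`, so `p_{n,d}` and `p_{n,u} - p_{n,d}` are quotients
`(exp (a₁ x + b₁ x²) - exp (a₂ x + b₂ x²)) / (exp (g x + b x²) - exp (-g x + b x²))`.
The denominator is `2 g x + O(x³)`, and the numerator agrees with `(c₀ + c₁ x) · 2 g x` up to
`O(x³)` once `c₀, c₁` are read off from the second-order Taylor polynomials; dividing by a
quantity of exact order `x` leaves an error `O(x²)`.
-/

open Filter Asymptotics Topology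

theorem Real.exp_sub_quadratic_isBigO :
    (fun y : ℝ => Real.exp y - (1 + y + y ^ 2 / 2)) =O[𝓝 0] fun y => y ^ 3 := by
  refine IsBigO.of_bound 1 ?_
  filter_upwards [Metric.closedBall_mem_nhds (0 : ℝ) one_pos] with y hy
  have hy1 : |y| ≤ 1 := by simpa [Real.dist_eq] using hy
  have h := Real.exp_bound hy1 (n := 3) (by norm_num)
  norm_num [Finset.sum_range_succ, Nat.factorial] at h
  rw [Real.norm_eq_abs, Real.norm_eq_abs, abs_pow, one_mul]
  nlinarith [pow_nonneg (abs_nonneg y) 3]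

noncomputable def expQuad (a b x : ℝ) : ℝ := Real.exp (a * x + b * x ^ 2)

theorem expQuad_sub_taylor_isBigO (a b : ℝ) :
    (fun x => expQuad a b x - (1 + a * x + (b + a ^ 2 / 2) * x ^ 2)) =O[𝓝 0]
      fun x => x ^ 3 := by
  set q : ℝ → ℝ := fun x => a * x + b * x ^ 2
  have hq : Tendsto q (𝓝 0) (𝓝 0) := by
    simpa [q] using (show Continuous q by fun_prop).tendsto 0
  have hqx : q =O[𝓝 0] fun x => x :=
    ((isBigO_refl _ _).const_mul_left a).add
      ((isLittleO_pow_id (by norm_num : 1 < 2)).isBigO.const_mul_left b)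
  have hexp := (Real.exp_sub_quadratic_isBigO.comp_tendsto hq).trans (hqx.pow 3)
  have hrest : (fun x : ℝ => x ^ 3 * (a * b + b ^ 2 * x / 2)) =O[𝓝 0] fun x => x ^ 3 :=
    ((isBigO_refl _ _).mul
      ((show Continuous fun x : ℝ => a * b + b ^ 2 * x / 2 by fun_prop).continuousAt.isBigO_one
        ℝ)).congr_right fun x => mul_one _
  refine (hexp.add hrest).congr_left fun x => ?_
  simp only [expQuad, Function.comp, q]
  ring

theorem div_sub_isBigO_of_sub_mul_isBigO {α 𝕜 : Type*} [NormedField 𝕜] {l : Filter α}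
    {f g L k : α → 𝕜} (hg : ∀ᶠ x in l, g x ≠ 0)
    (h : (fun x => f x - L x * g x) =O[l] fun x => k x * g x) :
    (fun x => f x / g x - L x) =O[l] k := by
  refine (h.mul (isBigO_refl (fun x => (g x)⁻¹) l)).congr' ?_ ?_ <;>
    filter_upwards [hg] with x hx <;> field_simp

theorem expQuad_ratio_isBigO (a₁ b₁ a₂ b₂ g b : ℝ) (hg : g ≠ 0) :
    (fun x => (expQuad a₁ b₁ x - expQuad a₂ b₂ x) / (expQuad g b x - expQuad (-g) b x)
        - ((a₁ - a₂) / (2 * g) + (b₁ - b₂ + (a₁ ^ 2 - a₂ ^ 2) / 2) / (2 * g) * x))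
      =O[𝓝[≠] 0] fun x => x ^ 2 := by
  set D : ℝ → ℝ := fun x => expQuad g b x - expQuad (-g) b x
  set L : ℝ → ℝ := fun x => (a₁ - a₂) / (2 * g) + (b₁ - b₂ + (a₁ ^ 2 - a₂ ^ 2) / 2) / (2 * g) * x
  have hD : (fun x => D x - 2 * g * x) =O[𝓝 0] fun x => x ^ 3 :=
    ((expQuad_sub_taylor_isBigO g b).sub (expQuad_sub_taylor_isBigO (-g) b)).congr_left
      fun x => by simp only [D]; ring
  have hDequiv : D ~[𝓝[≠] 0] fun x => 2 * g * x :=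
    (hD.mono nhdsWithin_le_nhds).trans_isLittleO
      (((isLittleO_pow_id (by norm_num : 1 < 3)).const_mul_right (by simpa using hg :
        2 * g ≠ 0)).mono nhdsWithin_le_nhds)
  have hxD : (fun x => x) =O[𝓝[≠] 0] D :=
    (isBigO_const_mul_left_iff (by simpa using hg : 2 * g ≠ 0)).1 hDequiv.isBigO_symm
  have hDne : ∀ᶠ x in 𝓝[≠] 0, D x ≠ 0 := by
    filter_upwards [hxD.eq_zero_imp, self_mem_nhdsWithin] with x hx hx0
    exact fun h => hx0 (hx h)
  have hL : L =O[𝓝 0] fun _ => (1 : ℝ) :=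
    (show Continuous L by fun_prop).continuousAt.isBigO_one ℝ
  have hcubic : (fun x => (expQuad a₁ b₁ x - expQuad a₂ b₂ x) - L x * D x) =O[𝓝 0]
      fun x => x ^ 3 := by
    have := ((expQuad_sub_taylor_isBigO a₁ b₁).sub (expQuad_sub_taylor_isBigO a₂ b₂)).sub
      ((hL.mul hD).congr_right fun x => one_mul _)
    refine this.congr_left fun x => ?_
    simp only [L, D]
    field_simp
    ring
  refine div_sub_isBigO_of_sub_mul_isBigO hDne ((hcubic.mono nhdsWithin_le_nhds).trans ?_)
  exact ((isBigO_refl (fun x : ℝ => x ^ 2) _).mul hxD).congr_left fun x => by ring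

theorem stmt11_general (μ σ r T : ℝ) (hσ : σ > 0) (hT : T > 0) (H : ℕ)
    (δ un dn rn pnu pnd : ℕ → ℝ)
    (hδ : ∀ n : ℕ, δ n = 1 / Real.sqrt n)
    (hu : ∀ n, un n = Real.exp (μ * T * δ n ^ 2 + σ * Real.sqrt T * δ n))
    (hd : ∀ n, dn n = Real.exp (μ * T * δ n ^ 2 - σ * Real.sqrt T * δ n))
    (hr' : ∀ n, rn n = r * T * δ n ^ 2)
    (hpu : ∀ n, pnu n = (un n ^ H * Real.exp (rn n) - dn n ^ (H + 1)) /
      (un n ^ (H + 1) - dn n ^ (H + 1)))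
    (hpd : ∀ n, pnd n = (Real.exp (rn n) * dn n ^ H - dn n ^ (H + 1)) /
      (un n ^ (H + 1) - dn n ^ (H + 1))) :
    ((fun n : ℕ => pnd n - (1 / (2 * ((H : ℝ) + 1))
        - ((μ - r) / (2 * ((H : ℝ) + 1) * σ) + (2 * (H : ℝ) + 1) * σ / (4 * ((H : ℝ) + 1)))
            * Real.sqrt T * δ n))
      =O[atTop] fun n => δ n ^ 2) ∧
    ((fun n : ℕ => (pnu n - pnd n) - (H : ℝ) / ((H : ℝ) + 1))
      =O[atTop] fun n => δ n ^ 2) := by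
  have hδ0 : Tendsto δ atTop (𝓝[≠] 0) := by
    have := tendsto_inv_atTop_nhdsGT_zero.comp
      (Real.tendsto_sqrt_atTop.comp tendsto_natCast_atTop_atTop)
    refine (this.mono_right (nhdsWithin_mono _ fun x hx => ne_of_gt hx)).congr fun n => ?_
    simp [hδ]
  have hsqrt : √T ^ 2 = T := Real.sq_sqrt hT.le
  have hsqrt0 : √T ≠ 0 := by positivity
  set s := σ * √T
  have hs0 : s ≠ 0 := by positivity
  have hs : ((H : ℝ) + 1) * s ≠ 0 := by positivity
  have key (a₁ b₁ a₂ b₂ : ℝ) :=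
    (expQuad_ratio_isBigO a₁ b₁ a₂ b₂ _ ((H + 1) * (μ * T)) hs).comp_tendsto hδ0
  constructor
  · refine (key (-(H * s)) (r * T + H * (μ * T)) (-((H + 1) * s)) ((H + 1) * (μ * T))).congr_left
      fun n => ?_
    simp only [Function.comp, hpd, hu, hd, hr', expQuad, ← Real.exp_nat_mul, ← Real.exp_add]
    congr 1
    · push_cast; ring_nf
    · simp only [s]
      field_simp
      linear_combination 8 * δ n * (μ - r) * hsqrt
  · refine (key (H * s) (r * T + H * (μ * T)) (-(H * s)) (r * T + H * (μ * T))).congr_left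
      fun n => ?_
    simp only [Function.comp, hpu, hpd, hu, hd, hr', expQuad, ← Real.exp_nat_mul, ← Real.exp_add]
    congr 1
    · rw [sub_div]; push_cast; ring_nf
    · field_simp
      ring

theorem stmt11 (μ σ r T : ℝ) (hμ : μ > 0) (hσ : σ > 0) (hr : r ≥ 0) (hT : T > 0) (H : ℕ)
    (δ un dn rn pnu pnd : ℕ → ℝ)
    (hδ : ∀ n : ℕ, δ n = 1 / Real.sqrt n)
    (hu : ∀ n, un n = Real.exp (μ * T * δ n ^ 2 + σ * Real.sqrt T * δ n))
    (hd : ∀ n, dn n = Real.exp (μ * T * δ n ^ 2 - σ * Real.sqrt T * δ n))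
    (hr' : ∀ n, rn n = r * T * δ n ^ 2)
    (hpu : ∀ n, pnu n = (un n ^ H * Real.exp (rn n) - dn n ^ (H + 1)) /
      (un n ^ (H + 1) - dn n ^ (H + 1)))
    (hpd : ∀ n, pnd n = (Real.exp (rn n) * dn n ^ H - dn n ^ (H + 1)) /
      (un n ^ (H + 1) - dn n ^ (H + 1))) :
    ((fun n : ℕ => pnd n - (1 / (2 * ((H : ℝ) + 1))
        - ((μ - r) / (2 * ((H : ℝ) + 1) * σ) + (2 * (H : ℝ) + 1) * σ / (4 * ((H : ℝ) + 1)))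
            * Real.sqrt T * δ n))
      =O[atTop] fun n => δ n ^ 2) ∧
    ((fun n : ℕ => (pnu n - pnd n) - (H : ℝ) / ((H : ℝ) + 1))
      =O[atTop] fun n => δ n ^ 2) :=
  stmt11_general μ σ r T hσ hT H δ un dn rn pnu pnd hδ hu hd hr' hpu hpd
end

section
/- Let u > e^r > d > 0, S₀ > 0, H ≥ 0, N > H, and Φ convex. Define p_u, q_u, p_d, q_d as in the delayed binomial model and let V_k(·,·) be the super-replication value process defined by the terminal condition V_{N-1}(S_{N-1-H}, S_{N-1-H} u^j d^{H-j}) = e^{-r}[p_j Φ(S_{N-1-H} u^{H+1}) + q_j Φ(S_{N-1-H} d^{H+1})] and the backward recursion V_k(s, s u^j d^{H-j}) = e^{-r}[p_j V_{k+1}(s u, s u^{H+1}) + q_j V_{k+1}(s d, s d^{H+1})] for H ≤ k ≤ N−2. Then V_k(s, s u^H) = e^{-r(N-k)} E[Φ(S_N) | chain started in up state], where the expectation is over the two-state Markov chain on up/down moves with transition matrix rows (q_d, p_d), (q_u, p_u) for the first N−k−1 steps, followed by a final block of H+1 identical moves (all up with probability p_u or p_d, all down with q_u or q_d, according to the previous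 state), applied multiplicatively to the price starting at s. -/
/-- One-step transition probability of the delayed-binomial pricing chain:
`a` is the previous move (true = up), `b` the next move. -/
noncomputable def dtrans (pu pd : ℝ) (a b : Bool) : ℝ :=
  if b then (if a then pu else pd) else (if a then 1 - pu else 1 - pd)

/-- Probability of a path `x` of the chain started in state `b0`. -/
noncomputable def pathProb (pu pd : ℝ) (b0 : Bool) {m : ℕ} (x : Fin (m + 1) → Bool) : ℝ :=
  ∏ i : Fin (m + 1),
    dtrans pu pd
      (if (i : ℕ) = 0 then b0
       else x ⟨(i : ℕ) - 1, lt_of_le_of_lt (Nat.sub_le _ _) i.isLt⟩)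
      (x i)

/-- Number of up moves before the final block. -/
def upCount {m : ℕ} (x : Fin (m + 1) → Bool) : ℕ :=
  (Finset.univ.filter fun i : Fin (m + 1) => i ≠ Fin.last m ∧ x i = true).card

/-- Terminal price: ordinary moves, followed by a final block of `H+1` identical moves
determined by the last coordinate. -/
noncomputable def termPrice (u d s : ℝ) (H : ℕ) {m : ℕ} (x : Fin (m + 1) → Bool) : ℝ :=
  s * u ^ upCount x * d ^ (m - upCount x) *
    (if x (Fin.last m) then u ^ (H + 1) else d ^ (H + 1))

/-! Splitting a path according to its first move, a path of length `m + 2` from `b0` is a move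
`b` followed by a path of length `m + 1` from `b`; its probability factors as
`dtrans b0 b` times that of the tail, and its terminal price is that of the tail started from
`s * u` or `s * d`. So the discounted path sums satisfy the same terminal condition and backward
recursion as `V`, and the two agree by induction on the horizon. -/

section PathDecomposition

variable (pu pd : ℝ)

lemma pathProb_cons (b0 b : Bool) {m : ℕ} (y : Fin (m + 1) → Bool) :
    pathProb pu pd b0 (Fin.cons b y) = dtrans pu pd b0 b * pathProb pu pd b y := by
  rw [pathProb, Fin.prod_univ_succ, pathProb]
  congr 1
  refine Finset.prod_congr rfl fun i _ => ?_
  rw [Fin.cons_succ]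
  congr 1
  rcases i with ⟨_ | k, hk⟩
  · simp
  · simp only [Fin.val_succ, Nat.add_one_ne_zero, if_false]
    exact Fin.cons_succ (α := fun _ => Bool) b y ⟨k, by omega⟩

lemma pathProb_const (b0 b : Bool) :
    pathProb pu pd b0 (fun _ : Fin 1 => b) = dtrans pu pd b0 b := by
  simp [pathProb]

lemma sum_pathProb_mul_zero (b0 : Bool) (g : (Fin 1 → Bool) → ℝ) :
    ∑ x : Fin 1 → Bool, pathProb pu pd b0 x * g x =
      ∑ b : Bool, dtrans pu pd b0 b * g (fun _ => b) := by
  refine Fintype.sum_equiv (Equiv.funUnique (Fin 1) Bool) _ _ fun x => ?_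
  have hx : x = fun _ => x 0 := funext fun i => congrArg x (Subsingleton.elim i 0)
  rw [hx, pathProb_const]
  rfl

lemma sum_pathProb_mul_succ (b0 : Bool) {m : ℕ} (g : (Fin (m + 2) → Bool) → ℝ) :
    ∑ x : Fin (m + 2) → Bool, pathProb pu pd b0 x * g x =
      ∑ b : Bool, dtrans pu pd b0 b *
        ∑ y : Fin (m + 1) → Bool, pathProb pu pd b y * g (Fin.cons b y) := by
  rw [← (Fin.consEquiv fun _ : Fin (m + 2) => Bool).sum_comp, Fintype.sum_prod_type]
  simp only [Fin.consEquiv, Equiv.coe_fn_mk, pathProb_cons, Finset.mul_sum, mul_assoc]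

end PathDecomposition

lemma upCount_cons {m : ℕ} (b : Bool) (y : Fin (m + 1) → Bool) :
    upCount (Fin.cons b y : Fin (m + 2) → Bool) = b.toNat + upCount y := by
  simp only [upCount, Finset.card_filter, Fin.sum_univ_succ, Fin.cons_zero, Fin.cons_succ,
    ← Fin.succ_last, Fin.succ_inj, ne_eq]
  cases b <;> simp [Fin.ext_iff]

lemma upCount_le {m : ℕ} (y : Fin (m + 1) → Bool) : upCount y ≤ m := by
  calc upCount y ≤ (Finset.univ.erase (Fin.last m)).card :=
        Finset.card_le_card fun i hi => by simp_all
    _ = m := by simp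

lemma termPrice_cons (u d s : ℝ) (H : ℕ) {m : ℕ} (b : Bool) (y : Fin (m + 1) → Bool) :
    termPrice u d s H (Fin.cons b y : Fin (m + 2) → Bool) =
      termPrice u d (s * if b then u else d) H y := by
  have hlast : (Fin.cons b y : Fin (m + 2) → Bool) (Fin.last (m + 1)) = y (Fin.last m) := by
    rw [← Fin.succ_last, Fin.cons_succ]
  have hle := upCount_le y
  rw [termPrice, termPrice, hlast, upCount_cons]
  cases b
  · rw [show m + 1 - (false.toNat + upCount y) = m - upCount y + 1 by simp; omega]
    simp only [Bool.toNat_false, zero_add, pow_succ, Bool.false_eq_true, if_false]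
    ring
  · rw [show m + 1 - (true.toNat + upCount y) = m - upCount y by simp; omega]
    simp only [Bool.toNat_true, pow_add, pow_one, if_true]
    ring

lemma termPrice_const (u d s : ℝ) (H : ℕ) (b : Bool) :
    termPrice u d s H (fun _ : Fin 1 => b) = s * if b then u ^ (H + 1) else d ^ (H + 1) := by
  have hcount : upCount (fun _ : Fin 1 => b) = 0 :=
    Finset.card_eq_zero.2 <| Finset.filter_eq_empty_iff.2 fun i _ h =>
      h.1 (Fin.ext (by omega))
  simp [termPrice, hcount]

lemma eq_discounted_sum_pathProb_of_recursion (u d r : ℝ) (H : ℕ) (Φ : ℝ → ℝ) (pu pd : ℝ)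
    (V : ℕ → ℝ → Bool → ℝ)
    (hV1 : ∀ s b0, V 1 s b0 = Real.exp (-r) *
      ∑ b : Bool, dtrans pu pd b0 b * Φ (s * if b then u ^ (H + 1) else d ^ (H + 1)))
    (hVrec : ∀ m, 1 ≤ m → ∀ s b0, V (m + 1) s b0 = Real.exp (-r) *
      ∑ b : Bool, dtrans pu pd b0 b * V m (s * if b then u else d) b)
    (m : ℕ) (s : ℝ) (b0 : Bool) :
    V (m + 1) s b0 = Real.exp (-(r * (m + 1))) *
      ∑ x : Fin (m + 1) → Bool, pathProb pu pd b0 x * Φ (termPrice u d s H x) := by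
  induction m generalizing s b0 with
  | zero =>
    rw [hV1, sum_pathProb_mul_zero]
    simp only [termPrice_const]
    norm_num
  | succ m ih =>
    have hdiscount : Real.exp (-(r * ((m + 1 : ℕ) + 1))) =
        Real.exp (-r) * Real.exp (-(r * (m + 1))) := by
      rw [← Real.exp_add]; push_cast; ring_nf
    rw [hVrec (m + 1) m.succ_pos, sum_pathProb_mul_succ, hdiscount, mul_assoc]
    simp only [ih, termPrice_cons]
    congr 1
    rw [Finset.mul_sum]
    exact Finset.sum_congr rfl fun b _ => by ring

theorem stmt13_general (u d r : ℝ) (H : ℕ)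
    (Φ : ℝ → ℝ)
    (pu pd : ℝ)
    (V : ℕ → ℝ → Bool → ℝ)
    (hV1 : ∀ s : ℝ,
      V 1 s true = Real.exp (-r) *
        (pu * Φ (s * u ^ (H + 1)) + (1 - pu) * Φ (s * d ^ (H + 1))) ∧
      V 1 s false = Real.exp (-r) *
        (pd * Φ (s * u ^ (H + 1)) + (1 - pd) * Φ (s * d ^ (H + 1))))
    (hVrec : ∀ m : ℕ, 1 ≤ m → ∀ s : ℝ,
      V (m + 1) s true = Real.exp (-r) *
        (pu * V m (s * u) true + (1 - pu) * V m (s * d) false) ∧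
      V (m + 1) s false = Real.exp (-r) *
        (pd * V m (s * u) true + (1 - pd) * V m (s * d) false)) :
    ∀ m : ℕ, ∀ s : ℝ, s > 0 →
      V (m + 1) s true = Real.exp (-(r * (m + 1))) *
        ∑ x : Fin (m + 1) → Bool, pathProb pu pd true x * Φ (termPrice u d s H x) := by
  intro m s _
  refine eq_discounted_sum_pathProb_of_recursion u d r H Φ pu pd V (fun s b0 => ?_)
    (fun m hm s b0 => ?_) m s true
  · cases b0 <;> simp [hV1 s, dtrans]
  · cases b0 <;> simp [hVrec m hm s, dtrans]

theorem stmt13 (u d r S0 : ℝ) (H N : ℕ)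
    (hu : u > Real.exp r) (hd : Real.exp r > d) (hd0 : d > 0) (hS0 : S0 > 0) (hHN : H < N)
    (Φ : ℝ → ℝ) (hΦ : ConvexOn ℝ Set.univ Φ)
    (pu pd : ℝ)
    (hpu : pu = (u ^ H * Real.exp r - d ^ (H + 1)) / (u ^ (H + 1) - d ^ (H + 1)))
    (hpd : pd = (Real.exp r * d ^ H - d ^ (H + 1)) / (u ^ (H + 1) - d ^ (H + 1)))
    (V : ℕ → ℝ → Bool → ℝ)
    (hV1 : ∀ s : ℝ,
      V 1 s true = Real.exp (-r) *
        (pu * Φ (s * u ^ (H + 1)) + (1 - pu) * Φ (s * d ^ (H + 1))) ∧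
      V 1 s false = Real.exp (-r) *
        (pd * Φ (s * u ^ (H + 1)) + (1 - pd) * Φ (s * d ^ (H + 1))))
    (hVrec : ∀ m : ℕ, 1 ≤ m → ∀ s : ℝ,
      V (m + 1) s true = Real.exp (-r) *
        (pu * V m (s * u) true + (1 - pu) * V m (s * d) false) ∧
      V (m + 1) s false = Real.exp (-r) *
        (pd * V m (s * u) true + (1 - pd) * V m (s * d) false)) :
    ∀ m : ℕ, ∀ s : ℝ, s > 0 →
      V (m + 1) s true = Real.exp (-(r * (m + 1))) *
        ∑ x : Fin (m + 1) → Bool, pathProb pu pd true x * Φ (termPrice u d s H x) :=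
  stmt13_general u d r H Φ pu pd V hV1 hVrec
end
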